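/- arXiv:1506.08098 — 4 statements merged into one kernel-verified Lean document; each statement's English description precedes it below -/
import Mathlib

section
/- Let A be a countably infinite alphabet. The two-sided full shift Σ_A^Z, with the topology generated by generalized cylinders Z(x,F) (for left-infinite words x and finite F ⊆ A) together with complements of finite unions of sets Z(x), is a Hausdorff topological space in which every generalized cylinder Z(x,F) is clopen. -/
open Set Topology Filter TopologicalSpace

universe u

/-- The two-sided full shift over `A`: sequences over `A ∪ {ø}` (with `ø = none`)
in which the empty letter propagates to the right. -/
def SigmaZ (A : Type u) : Type u :=
  {x : ℤ → Option A // ∀ i, x i = none → x (i + 1) = none}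

namespace SigmaZ

variable {A : Type u}

/-- The generalized cylinder `Z(x, F)`, where the finite nonempty sequence `x` is
encoded by its length `k` and its letters `w i` for `i ≤ k`. -/
def cyl (k : ℤ) (w : ℤ → A) (F : Finset A) : Set (SigmaZ A) :=
  {y | (∀ i ≤ k, y.1 i = some (w i)) ∧ ∀ a ∈ F, y.1 (k + 1) ≠ some a}

/-- Generalized cylinders together with complements of finite unions of cylinders `Z(x)`. -/
def basicSets (A : Type u) : Set (Set (SigmaZ A)) :=
  {s | (∃ (k : ℤ) (w : ℤ → A) (F : Finset A), s = cyl k w F) ∨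
    ∃ (n : ℕ) (ks : Fin n → ℤ) (ws : Fin n → ℤ → A),
      s = (⋃ j, cyl (ks j) (ws j) ∅)ᶜ}

instance : TopologicalSpace (SigmaZ A) :=
  TopologicalSpace.generateFrom (basicSets A)

/-- The empty sequence `Ø`. -/
def emptySeq (A : Type u) : SigmaZ A := ⟨fun _ => none, fun _ _ => rfl⟩

/-- The shift map. -/
def shift (x : SigmaZ A) : SigmaZ A :=
  ⟨fun i => x.1 (i + 1), fun i h => x.2 (i + 1) h⟩

end SigmaZ

namespace SigmaZ

variable {A : Type u}

lemma none_mono (x : SigmaZ A) {j i : ℤ} (h : j ≤ i) (hj : x.1 j = none) :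
    x.1 i = none :=
  Int.le_induction hj (fun n _ ih => x.2 n ih) i h

lemma isSome_of_le (x : SigmaZ A) {j i : ℤ} (h : j ≤ i) {a : A}
    (hi : x.1 i = some a) : ∃ b, x.1 j = some b := by
  cases hb : x.1 j with
  | none => rw [x.none_mono h hb] at hi; exact absurd hi (by simp)
  | some b => exact ⟨b, rfl⟩

lemma isOpen_cyl (k : ℤ) (w : ℤ → A) (F : Finset A) : IsOpen (cyl k w F) :=
  TopologicalSpace.GenerateOpen.basic _ (Or.inl ⟨k, w, F, rfl⟩)

lemma isOpen_compl_cyl (k : ℤ) (w : ℤ → A) : IsOpen ((cyl k w ∅)ᶜ) := by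
  apply TopologicalSpace.GenerateOpen.basic
  refine Or.inr ⟨1, fun _ => k, fun _ => w, ?_⟩
  rw [Set.iUnion_const]

lemma compl_cyl_eq (k : ℤ) (w : ℤ → A) (F : Finset A) :
    (cyl k w F)ᶜ =
      (cyl k w ∅)ᶜ ∪ ⋃ a ∈ F, cyl (k + 1) (Function.update w (k + 1) a) ∅ := by
  ext y
  constructor
  · intro hy
    by_cases hp : ∀ i ≤ k, y.1 i = some (w i)
    · have : ¬ ∀ a ∈ F, y.1 (k + 1) ≠ some a := fun h => hy ⟨hp, h⟩
      push_neg at this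
      obtain ⟨a, haF, ha⟩ := this
      refine Or.inr (Set.mem_biUnion haF ⟨?_, by simp⟩)
      intro i hi
      rcases eq_or_lt_of_le hi with rfl | hi'
      · simpa [Function.update_self] using ha
      · have hik : i ≤ k := by omega
        rw [Function.update_of_ne (by omega)]
        exact hp i hik
    · exact Or.inl fun h => hp h.1
  · rintro (hy | hy)
    · intro h
      exact hy ⟨h.1, by simp⟩
    · obtain ⟨a, haF, ha⟩ := by simpa using hy
      intro h
      exact h.2 a haF (by simpa [Function.update_self] using ha.1 (k + 1) le_rfl)

lemma isClosed_cyl (k : ℤ) (w : ℤ → A) (F : Finset A) : IsClosed (cyl k w F) := by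
  rw [← isOpen_compl_iff, compl_cyl_eq]
  exact (isOpen_compl_cyl k w).union
    (isOpen_biUnion fun a _ => isOpen_cyl _ _ _)

lemma mem_cyl_self [Nonempty A] (x : SigmaZ A) {i : ℤ} {a : A}
    (hi : x.1 i = some a) :
    x ∈ cyl i (fun j => (x.1 j).getD (Classical.arbitrary A)) ∅ := by
  refine ⟨fun j hj => ?_, by simp⟩
  obtain ⟨b, hb⟩ := x.isSome_of_le hj hi
  simp [hb]

end SigmaZ

/-- The two-sided full shift over a countably infinite alphabet, with the topology
generated by generalized cylinders and complements of finite unions of cylinders,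
is Hausdorff and every generalized cylinder `Z(x,F)` is clopen. -/
theorem stmt0 {A : Type u} [Countable A] [Infinite A] :
    T2Space (SigmaZ A) ∧
      ∀ (k : ℤ) (w : ℤ → A) (F : Finset A), IsClopen (SigmaZ.cyl k w F) := by
  haveI : Nonempty A := inferInstance
  refine ⟨⟨fun x y hxy => ?_⟩, fun k w F => ⟨SigmaZ.isClosed_cyl k w F, SigmaZ.isOpen_cyl k w F⟩⟩
  have : ∃ i, x.1 i ≠ y.1 i := by
    by_contra h
    push_neg at h
    exact hxy (Subtype.ext (funext h))
  obtain ⟨i, hi⟩ := this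
  set wx : ℤ → A := fun j => (x.1 j).getD (Classical.arbitrary A) with hwx
  set wy : ℤ → A := fun j => (y.1 j).getD (Classical.arbitrary A) with hwy
  cases hxa : x.1 i with
  | none =>
    cases hyb : y.1 i with
    | none => exact absurd (hxa.trans hyb.symm) hi
    | some b =>
      refine ⟨(SigmaZ.cyl i wy ∅)ᶜ, SigmaZ.cyl i wy ∅,
        SigmaZ.isOpen_compl_cyl i wy, SigmaZ.isOpen_cyl i wy ∅, ?_,
        y.mem_cyl_self hyb, disjoint_compl_left⟩
      intro hx
      have := hx.1 i le_rfl
      rw [hxa] at this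
      exact absurd this (by simp)
  | some a =>
    cases hyb : y.1 i with
    | none =>
      refine ⟨SigmaZ.cyl i wx ∅, (SigmaZ.cyl i wx ∅)ᶜ,
        SigmaZ.isOpen_cyl i wx ∅, SigmaZ.isOpen_compl_cyl i wx,
        x.mem_cyl_self hxa, ?_, disjoint_compl_right⟩
      intro hy
      have := hy.1 i le_rfl
      rw [hyb] at this
      exact absurd this (by simp)
    | some b =>
      refine ⟨SigmaZ.cyl i wx ∅, SigmaZ.cyl i wy ∅,
        SigmaZ.isOpen_cyl i wx ∅, SigmaZ.isOpen_cyl i wy ∅,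
        x.mem_cyl_self hxa, y.mem_cyl_self hyb, ?_⟩
      rw [Set.disjoint_left]
      intro z hzx hzy
      have h1 := hzx.1 i le_rfl
      have h2 := hzy.1 i le_rfl
      rw [h1] at h2
      have : wx i = wy i := by exact Option.some.inj h2
      rw [hwx, hwy] at this
      simp [hxa, hyb] at this
      rw [hxa, hyb, this] at hi
      exact hi rfl
end

section
/- The two-sided full shift Σ_A^Z over a countably infinite alphabet A, with the cylinder topology, is not first countable: the point Ø (the sequence that is constantly ø) has no countable neighborhood basis. -/
open Set Topology Filter TopologicalSpace

universe u

/-- Auxiliary decreasing sequence of coordinates used for diagonalization. -/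
def cseq (k : ℕ → ℤ) : ℕ → ℤ
  | 0 => min (k 0) 0
  | m + 1 => min (cseq k m - 1) (min (k (m + 1)) 0)

lemma cseq_le (k : ℕ → ℤ) (m : ℕ) : cseq k m ≤ k m := by
  cases m with
  | zero => exact min_le_left _ _
  | succ m => exact le_trans (min_le_right _ _) (min_le_left _ _)

lemma cseq_nonpos (k : ℕ → ℤ) (m : ℕ) : cseq k m ≤ 0 := by
  cases m with
  | zero => exact min_le_right _ _
  | succ m => exact le_trans (min_le_right _ _) (min_le_right _ _)

lemma cseq_strictAnti (k : ℕ → ℤ) : StrictAnti (cseq k) := by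
  apply strictAnti_nat_of_succ_lt
  intro m
  calc cseq k (m + 1) ≤ cseq k m - 1 := min_le_left _ _
    _ < cseq k m := by omega

/-- Each basic set containing `Ø` is determined by countably many cylinders. -/
lemma aux_basic {A : Type u} (s : Set (SigmaZ A)) :
    ∃ S : Set (ℤ × (ℤ → A)), S.Countable ∧
      (s ∈ SigmaZ.basicSets A → SigmaZ.emptySeq A ∈ s →
        ∀ y : SigmaZ A, (∀ p ∈ S, y ∉ SigmaZ.cyl p.1 p.2 ∅) → y ∈ s) := by
  by_cases hs : s ∈ SigmaZ.basicSets A ∧ SigmaZ.emptySeq A ∈ s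
  · obtain ⟨hmem, hO⟩ := hs
    rcases hmem with ⟨k, w, F, rfl⟩ | ⟨n, ks, ws, rfl⟩
    · exact absurd (hO.1 k le_rfl) (by simp [SigmaZ.emptySeq])
    · refine ⟨Set.range (fun j => (ks j, ws j)), (Set.finite_range _).countable, ?_⟩
      intro _ _ y hy
      simp only [Set.mem_compl_iff, Set.mem_iUnion, not_exists]
      intro j
      exact hy _ ⟨j, rfl⟩
  · exact ⟨∅, Set.countable_empty, fun h1 h2 => absurd ⟨h1, h2⟩ hs⟩

/-- The two-sided full shift over a countably infinite alphabet is not first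
countable: the empty sequence `Ø` has no countable neighborhood basis. -/
theorem stmt2 {A : Type u} [Countable A] [Infinite A] :
    ¬ (nhds (SigmaZ.emptySeq A)).IsCountablyGenerated := by
  intro h
  classical
  haveI : Nonempty A := inferInstance
  obtain ⟨V, hV⟩ := (nhds (SigmaZ.emptySeq A)).exists_antitone_basis
  have hB : TopologicalSpace.IsTopologicalBasis
      ((fun f => Set.sInter f) '' {f : Set (Set (SigmaZ A)) | f.Finite ∧ f ⊆ SigmaZ.basicSets A}) :=
    TopologicalSpace.isTopologicalBasis_of_subbasis rfl
  -- for each n choose a finite family of subbasic sets between Ø and V n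
  have hFn : ∀ n : ℕ, ∃ F : Set (Set (SigmaZ A)), F.Finite ∧ F ⊆ SigmaZ.basicSets A ∧
      SigmaZ.emptySeq A ∈ ⋂₀ F ∧ ⋂₀ F ⊆ V n := by
    intro n
    have hVn : V n ∈ nhds (SigmaZ.emptySeq A) := hV.1.mem_of_mem trivial
    rcases hB.mem_nhds_iff.mp hVn with ⟨t, ⟨f, ⟨hf1, hf2⟩, rfl⟩, hOt, hts⟩
    exact ⟨f, hf1, hf2, hOt, hts⟩
  choose F hFfin hFsub hFmem hFsubV using hFn
  choose g hgc hg using fun s : Set (SigmaZ A) => aux_basic (A := A) s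
  set S : Set (ℤ × (ℤ → A)) :=
    insert (1, fun _ => Classical.arbitrary A) (⋃ n, ⋃ s ∈ F n, g s) with hSdef
  have hScount : S.Countable :=
    ((Set.countable_iUnion (fun n =>
      ((hFfin n).countable.biUnion fun s _ => hgc s))).insert _)
  obtain ⟨e, he⟩ := hScount.exists_eq_range ⟨_, Set.mem_insert _ _⟩
  -- the diagonalizing word w and point y
  set c : ℕ → ℤ := cseq (fun m => (e m).1) with hcdef
  have cinj : Function.Injective c := (cseq_strictAnti _).injective
  set w : ℤ → A := fun i =>
    if h : ∃ m, c m = i then Classical.choose (exists_ne ((e h.choose).2 i))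
    else Classical.arbitrary A with hwdef
  have hw : ∀ m, w (c m) ≠ (e m).2 (c m) := by
    intro m
    have hh : ∃ m', c m' = c m := ⟨m, rfl⟩
    have h1 : w (c m) = Classical.choose (exists_ne ((e hh.choose).2 (c m))) := by
      simp only [hwdef]
      exact dif_pos hh
    have hm : hh.choose = m := cinj hh.choose_spec
    rw [h1, hm]
    exact Classical.choose_spec (exists_ne ((e m).2 (c m)))
  set y : SigmaZ A := ⟨fun i => if i ≤ 0 then some (w i) else none, by
    intro i hi
    by_cases h0 : i ≤ 0
    · simp [h0] at hi
    · have : ¬ i + 1 ≤ 0 := by omega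
      simp [this]⟩ with hydef
  have hycyl : y ∈ SigmaZ.cyl 0 w ∅ := by
    refine ⟨fun i hi => ?_, fun a ha => absurd ha (Finset.notMem_empty a)⟩
    simp only [hydef, if_pos hi]
  have hyS : ∀ p ∈ S, y ∉ SigmaZ.cyl p.1 p.2 ∅ := by
    intro p hp
    rw [he] at hp
    obtain ⟨m, rfl⟩ := hp
    rintro ⟨h1, -⟩
    have h2 := h1 (c m) (cseq_le _ m)
    have h3 : y.1 (c m) = some (w (c m)) := by
      simp only [hydef, if_pos (cseq_nonpos (fun m => (e m).1) m)]
      exact if_pos (cseq_nonpos (fun m => (e m).1) m)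
    rw [h3] at h2
    exact hw m (Option.some.inj h2)
  have hyV : ∀ n, y ∈ V n := by
    intro n
    refine hFsubV n ?_
    intro s hs
    refine hg s (hFsub n hs) (hFmem n s hs) y ?_
    intro p hp
    refine hyS p ?_
    exact Set.mem_insert_iff.mpr (Or.inr (Set.mem_iUnion.mpr ⟨n, Set.mem_iUnion₂.mpr ⟨s, hs, hp⟩⟩))
  -- the neighborhood of Ø avoiding y
  set N : Set (SigmaZ A) := (SigmaZ.cyl 0 w ∅)ᶜ with hNdef
  have hNbasic : N ∈ SigmaZ.basicSets A := by
    refine Or.inr ⟨1, fun _ => 0, fun _ => w, ?_⟩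
    rw [Set.iUnion_const]
  have hNopen : IsOpen N := TopologicalSpace.GenerateOpen.basic _ hNbasic
  have hON : SigmaZ.emptySeq A ∈ N := by
    rintro ⟨h1, -⟩
    exact absurd (h1 0 le_rfl) (by simp [SigmaZ.emptySeq])
  obtain ⟨n, -, hVN⟩ := hV.1.mem_iff.mp (hNopen.mem_nhds hON)
  exact hVN (hyV n) hycyl
end

section
/- The projection map π : Σ_A^Z → Σ_A^N onto the positive coordinates (sending a two-sided sequence (x_i)_{i∈Z} to (x_i)_{i≥1}) is continuous at a point x if and only if l(x) ≥ 0, where l(x) = sup{ i : x_i ≠ ø } (with l(Ø) = −∞). -/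
open Set Topology Filter TopologicalSpace

universe u

/-- The Ott–Tomforde–Willis one-sided full shift over `A`. -/
def OneSided (A : Type u) : Type u :=
  {y : ℕ → Option A // ∀ n, y n = none → y (n + 1) = none}

namespace OneSided

variable {A : Type u}

/-- Generalized cylinder `Z(w, F)` of the one-sided full shift. -/
def cyl (w : List A) (F : Finset A) : Set (OneSided A) :=
  {y | (∀ n : ℕ, n < w.length → y.1 n = w[n]?) ∧ ∀ a ∈ F, y.1 w.length ≠ some a}

instance : TopologicalSpace (OneSided A) :=
  TopologicalSpace.generateFrom {s | ∃ (w : List A) (F : Finset A), s = cyl w F}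

end OneSided

namespace SigmaZ

variable {A : Type u}

/-- The projection of the two-sided full shift onto the positive coordinates. -/
def proj (x : SigmaZ A) : OneSided A :=
  ⟨fun n => x.1 ((n : ℤ) + 1), fun n h => by
    have h2 := x.2 ((n : ℤ) + 1) h
    have h3 : ((n : ℤ) + 1) + 1 = ((n + 1 : ℕ) : ℤ) + 1 := by push_cast; ring
    rwa [h3] at h2⟩

end SigmaZ

section Aux

variable {A : Type u}

/-- Noneness propagates rightward. -/
lemma SigmaZ.none_mono_s5 (x : SigmaZ A) {i j : ℤ} (hij : i ≤ j) (h : x.1 i = none) :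
    x.1 j = none := by
  have : ∀ n : ℕ, x.1 (i + n) = none := by
    intro n
    induction n with
    | zero => simpa using h
    | succ m ih =>
      have := x.2 (i + m) ih
      convert this using 2
      push_cast; ring
  have hj : j = i + ((j - i).toNat : ℤ) := by
    rw [Int.toNat_of_nonneg (by omega)]; ring
  rw [hj]; exact this _

lemma SigmaZ.cyl_open (k : ℤ) (w : ℤ → A) (F : Finset A) : IsOpen (SigmaZ.cyl k w F) :=
  TopologicalSpace.GenerateOpen.basic _ (Or.inl ⟨k, w, F, rfl⟩)

lemma OneSided.cyl_open (w : List A) (F : Finset A) : IsOpen (OneSided.cyl w F) :=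
  TopologicalSpace.GenerateOpen.basic _ ⟨w, F, rfl⟩

end Aux

/-- The projection onto the positive coordinates `π : Σ_A^ℤ → Σ_A^ℕ` is continuous
at `x` if and only if `l(x) ≥ 0`, i.e. iff the zeroth coordinate of `x` is not `ø`. -/
theorem stmt5 {A : Type u} [Countable A] [Infinite A] (x : SigmaZ A) :
    ContinuousAt (SigmaZ.proj : SigmaZ A → OneSided A) x ↔ x.1 0 ≠ none := by
  classical
  haveI : Nonempty A := inferInstance
  constructor
  · -- contrapositive: if x.1 0 = none then not continuous
    intro hc hx0
    obtain ⟨a⟩ := (inferInstance : Nonempty A)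
    have hx1 : x.1 1 = none := x.none_mono_s5 (by norm_num) hx0
    -- the family of approximants
    set zf : A → ℤ → Option A := fun b i =>
      if x.1 i = none then (if i ≤ 0 then some b else if i = 1 then some a else none)
      else x.1 i with hzf
    have hzv1 : ∀ b i, x.1 i ≠ none → zf b i = x.1 i := by
      intro b i h; simp [hzf, h]
    have hzv2 : ∀ b i, x.1 i = none → i ≤ 0 → zf b i = some b := by
      intro b i h hi; simp [hzf, h, hi]
    have hzv3 : ∀ b, zf b 1 = some a := by
      intro b; simp [hzf, hx1]
    have hzv4 : ∀ b i, x.1 i = none → 2 ≤ i → zf b i = none := by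
      intro b i h hi
      simp [hzf, h, show ¬ i ≤ 0 by omega, show i ≠ 1 by omega]
    set z : A → SigmaZ A := fun b =>
      ⟨zf b, by
        intro i hi
        by_cases h1 : x.1 i = none
        · have h2 : 2 ≤ i := by
            by_contra h2
            by_cases h3 : i ≤ 0
            · rw [hzv2 b i h1 h3] at hi; exact nomatch hi
            · have : i = 1 := by omega
              subst this
              rw [hzv3 b] at hi; exact nomatch hi
          exact hzv4 b (i + 1) (x.2 i h1) (by omega)
        · rw [hzv1 b i h1] at hi
          exact absurd hi h1⟩ with hz
    have hzc : ∀ b i, (z b).1 i = zf b i := fun _ _ => rfl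
    -- z tends to x along the cofinite filter
    have hT : Filter.Tendsto z Filter.cofinite (nhds x) := by
      refine TopologicalSpace.tendsto_nhds_generateFrom_iff.mpr ?_
      rintro s (⟨k, w, F, rfl⟩ | ⟨n, ks, ws, rfl⟩) hxs
      · -- cylinder case
        have hk : k ≤ -1 := by
          by_contra hk
          have h0 := hxs.1 0 (by omega)
          rw [hx0] at h0
          exact nomatch h0
        rw [Filter.mem_cofinite]
        refine F.finite_toSet.subset ?_
        intro b hb
        by_contra hbF
        apply hb
        show z b ∈ SigmaZ.cyl k w F
        constructor
        · intro i hi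
          have hxi := hxs.1 i hi
          rw [hzc, hzv1 b i (by rw [hxi]; exact fun h => nomatch h)]
          exact hxi
        · intro c hcF
          rw [hzc]
          by_cases h1 : x.1 (k + 1) = none
          · rw [hzv2 b (k+1) h1 (by omega)]
            intro h
            rw [Option.some.injEq] at h
            subst h
            exact hbF (by exact_mod_cast hcF)
          · rw [hzv1 b (k+1) h1]
            exact hxs.2 c hcF
      · -- complement of finite union case
        have hBad : (⋃ j : Fin n, ({ws j 0, ws j (ks j)} : Set A)).Finite :=
          Set.finite_iUnion fun j => (Set.finite_singleton _).insert _
        rw [Filter.mem_cofinite]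
        have hE : (z ⁻¹' (⋃ j, SigmaZ.cyl (ks j) (ws j) ∅)ᶜ)ᶜ
            = z ⁻¹' (⋃ j, SigmaZ.cyl (ks j) (ws j) ∅) := by
          rw [Set.preimage_compl, compl_compl]
        rw [hE]
        refine hBad.subset ?_
        intro b hb
        rw [Set.mem_preimage, Set.mem_iUnion] at hb
        obtain ⟨j, hj⟩ := hb
        have hxj : x ∉ SigmaZ.cyl (ks j) (ws j) ∅ := fun h => hxs (Set.mem_iUnion.2 ⟨j, h⟩)
        rw [Set.mem_iUnion]
        refine ⟨j, ?_⟩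
        by_cases hk : 0 ≤ ks j
        · -- z b agrees with ws j at 0, so b = ws j 0
          have h0 := hj.1 0 hk
          rw [hzc, hzv2 b 0 hx0 le_rfl, Option.some.injEq] at h0
          exact Set.mem_insert_iff.2 (Or.inl h0)
        · push_neg at hk
          have hfail : ∃ i ≤ ks j, x.1 i ≠ some (ws j i) := by
            by_contra hall
            push_neg at hall
            exact hxj ⟨hall, by simp⟩
          obtain ⟨i0, hi0, hxi0⟩ := hfail
          by_cases h1 : x.1 i0 = none
          · have hks : x.1 (ks j) = none := x.none_mono_s5 hi0 h1
            have h2 := hj.1 (ks j) le_rfl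
            rw [hzc, hzv2 b (ks j) hks (by omega), Option.some.injEq] at h2
            exact Set.mem_insert_iff.2 (Or.inr (by simp [h2]))
          · have h2 := hj.1 i0 hi0
            rw [hzc, hzv1 b i0 h1] at h2
            exact absurd h2 hxi0
    -- now derive the contradiction
    have hcomp : Filter.Tendsto (fun b => SigmaZ.proj (z b)) Filter.cofinite
        (nhds (SigmaZ.proj x)) := Filter.Tendsto.comp hc hT
    have hU : OneSided.cyl ([] : List A) {a} ∈ nhds (SigmaZ.proj x) := by
      refine (OneSided.cyl_open _ _).mem_nhds ?_
      constructor
      · intro n hn; simp at hn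
      · intro c hc'
        show x.1 (((0 : ℕ) : ℤ) + 1) ≠ some c
        rw [show (((0 : ℕ) : ℤ) + 1) = 1 by norm_num, hx1]
        exact fun h => nomatch h
    have hEv := hcomp hU
    rw [Filter.mem_map, Filter.mem_cofinite] at hEv
    have hall : ∀ b : A, SigmaZ.proj (z b) ∉ OneSided.cyl ([] : List A) {a} := by
      intro b hmem
      apply hmem.2 a (Finset.mem_singleton_self a)
      show (z b).1 (((0 : ℕ) : ℤ) + 1) = some a
      rw [show (((0 : ℕ) : ℤ) + 1) = 1 by norm_num, hzc, hzv3]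
    have : ((fun b => SigmaZ.proj (z b)) ⁻¹' OneSided.cyl ([] : List A) {a})ᶜ = Set.univ := by
      ext b; simpa using hall b
    rw [this] at hEv
    exact Set.infinite_univ hEv
  · -- if x.1 0 ≠ none then continuous
    intro hx0
    obtain ⟨d⟩ := (inferInstance : Nonempty A)
    refine TopologicalSpace.tendsto_nhds_generateFrom_iff.mpr ?_
    rintro s ⟨w, F, rfl⟩ hxs
    set k : ℤ := (w.length : ℤ) with hk
    have hsome : ∀ i ≤ k, x.1 i ≠ none := by
      intro i hi hnone
      by_cases h0 : i ≤ 0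
      · exact hx0 (x.none_mono_s5 h0 hnone)
      · push_neg at h0
        have hn : ∃ n : ℕ, i = (n : ℤ) + 1 ∧ n < w.length := ⟨(i - 1).toNat, by omega, by omega⟩
        obtain ⟨n, rfl, hnw⟩ := hn
        have hw := hxs.1 n hnw
        rw [List.getElem?_eq_getElem hnw] at hw
        rw [show ((SigmaZ.proj x).1 n) = x.1 ((n : ℤ) + 1) from rfl] at hw
        rw [hw] at hnone
        exact nomatch hnone
    set w' : ℤ → A := fun i => (x.1 i).getD d with hw'
    have hxcyl : x ∈ SigmaZ.cyl k w' F := by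
      constructor
      · intro i hi
        have hs := hsome i hi
        cases h : x.1 i with
        | none => exact absurd h hs
        | some c => simp [hw', h]
      · intro c hcF
        exact hxs.2 c hcF
    refine Filter.mem_of_superset ((SigmaZ.cyl_open k w' F).mem_nhds hxcyl) ?_
    intro y hy
    constructor
    · intro n hn
      have h1 : (n : ℤ) + 1 ≤ k := by omega
      have hy1 := hy.1 _ h1
      have hx1 := hxcyl.1 _ h1
      show y.1 ((n : ℤ) + 1) = _
      rw [hy1, ← hx1]
      exact hxs.1 n hn
    · intro c hcF
      exact hy.2 c hcF
end

section
/- A nonempty proper two-sided shift space Λ ⊊ Σ_A^Z is never a finitely defined subset of Σ_A^Z. -/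
open Set Topology Filter TopologicalSpace

universe u

namespace SigmaZ

variable {A : Type u}

/-- A two-sided shift space: a closed, shift-invariant subset in which the
infinite sequences (those with no empty letter) are dense. -/
def IsShiftSpace (Lam : Set (SigmaZ A)) : Prop :=
  IsClosed Lam ∧ shift '' Lam = Lam ∧
    Lam ⊆ closure {x ∈ Lam | ∀ i, x.1 i ≠ none}

end SigmaZ

namespace SigmaZ

variable {A : Type u}

/-- The pseudo cylinder `[b]_k^ℓ` of `X`, where the block `b` over `A ∪ {ø}` is
encoded as a function on the coordinates `k ≤ i ≤ ℓ`. -/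
def pseudoCyl (X : Set (SigmaZ A)) (k l : ℤ) (b : ℤ → Option A) : Set (SigmaZ A) :=
  {x ∈ X | ∀ i, k ≤ i → i ≤ l → x.1 i = b i}

/-- `S` is a pseudo cylinder of `X` (by convention, `∅` is one). -/
def IsPseudoCyl (X : Set (SigmaZ A)) (S : Set (SigmaZ A)) : Prop :=
  S = ∅ ∨ ∃ (k l : ℤ) (b : ℤ → Option A), k ≤ l ∧ S = pseudoCyl X k l b

/-- `C` is finitely defined in `X`: both `C` and `X \ C` are unions of pseudo
cylinders of `X`. -/
def FinitelyDefined (X C : Set (SigmaZ A)) : Prop :=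
  (∃ S : Set (Set (SigmaZ A)), (∀ s ∈ S, IsPseudoCyl X s) ∧ C = ⋃₀ S) ∧
  (∃ T : Set (Set (SigmaZ A)), (∀ s ∈ T, IsPseudoCyl X s) ∧ X \ C = ⋃₀ T)

end SigmaZ

namespace SigmaZ

variable {A : Type u}

/-- Shift by an arbitrary integer. -/
def shiftBy (n : ℤ) (x : SigmaZ A) : SigmaZ A :=
  ⟨fun i => x.1 (i + n), fun i h => by
    show x.1 (i + 1 + n) = none
    rw [show i + 1 + n = i + n + 1 by ring]
    exact x.2 (i + n) h⟩

/-- Truncation of a sequence after position `l`. -/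
def trunc (x : SigmaZ A) (l : ℤ) : SigmaZ A :=
  ⟨fun i => if i ≤ l then x.1 i else none, fun i h => by
    have h' : (if i ≤ l then x.1 i else none) = none := h
    show (if i + 1 ≤ l then x.1 (i + 1) else none) = none
    by_cases h1 : i + 1 ≤ l
    · have hi : i ≤ l := by omega
      rw [if_pos hi] at h'
      rw [if_pos h1]
      exact x.2 i h'
    · rw [if_neg h1]⟩

lemma shift_inj : Function.Injective (shift (A := A)) := by
  intro x y hxy
  apply Subtype.ext; funext i
  have := congrArg (fun z => z.1 (i - 1)) hxy
  simpa [shift] using this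

lemma mem_iff_shift_mem (Lam : Set (SigmaZ A)) (hinv : shift '' Lam = Lam)
    (x : SigmaZ A) : shift x ∈ Lam ↔ x ∈ Lam := by
  constructor
  · intro hx
    rw [← hinv] at hx
    obtain ⟨y, hy, hyx⟩ := hx
    rwa [← shift_inj hyx]
  · intro hx
    rw [← hinv]; exact ⟨x, hx, rfl⟩

lemma shiftBy_mem (Lam : Set (SigmaZ A)) (hinv : shift '' Lam = Lam)
    (n : ℤ) (x : SigmaZ A) : shiftBy n x ∈ Lam ↔ x ∈ Lam := by
  induction n using Int.induction_on with
  | zero =>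
      have : shiftBy 0 x = x := Subtype.ext (funext fun i => by simp [shiftBy])
      rw [this]
  | succ n ih =>
      have he : shiftBy ((n : ℤ) + 1) x = shift (shiftBy n x) :=
        Subtype.ext (funext fun i => by
          show x.1 (i + ((n : ℤ) + 1)) = x.1 (i + 1 + n)
          ring_nf)
      rw [he, mem_iff_shift_mem Lam hinv, ih]
  | pred n ih =>
      have he : shiftBy (-(n : ℤ)) x = shift (shiftBy (-(n : ℤ) - 1) x) :=
        Subtype.ext (funext fun i => by
          show x.1 (i + -(n : ℤ)) = x.1 (i + 1 + (-(n : ℤ) - 1))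
          ring_nf)
      rw [he, mem_iff_shift_mem Lam hinv] at ih
      rw [ih]

/-- A nonempty proper shift space is never a finitely defined subset of the full
shift `Σ_A^ℤ`. -/
theorem stmt15 {A : Type u} [Countable A] [Infinite A] (Lam : Set (SigmaZ A))
    (h : IsShiftSpace Lam) (hne : Lam.Nonempty) (hproper : Lam ≠ Set.univ) :
    ¬ FinitelyDefined Set.univ Lam := by
  rintro ⟨⟨S, hS, hSU⟩, ⟨T, hT, hTU⟩⟩
  obtain ⟨_, hinv, _⟩ := h
  -- the point of Λ and its pseudo cylinder
  obtain ⟨x, hx⟩ := hne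
  have hxU : x ∈ ⋃₀ S := by rw [← hSU]; exact hx
  obtain ⟨s, hsS, hxs⟩ := hxU
  have hsub : s ⊆ Lam := by rw [hSU]; exact Set.subset_sUnion_of_mem hsS
  rcases hS s hsS with hse | ⟨k1, l1, b1, hk1, hs1⟩
  · rw [hse] at hxs; exact hxs
  -- the point outside Λ and its pseudo cylinder
  obtain ⟨z, hz⟩ : ∃ z, z ∉ Lam := by
    by_contra hc
    push_neg at hc
    exact hproper (Set.eq_univ_of_forall hc)
  have hzT : z ∈ ⋃₀ T := by
    rw [← hTU]; exact ⟨Set.mem_univ z, hz⟩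
  obtain ⟨t, htT, hzt⟩ := hzT
  have htsub : t ⊆ Set.univ \ Lam := by rw [hTU]; exact Set.subset_sUnion_of_mem htT
  rcases hT t htT with hte | ⟨k2, l2, b2, hk2, ht2⟩
  · rw [hte] at hzt; exact hzt
  by_cases hO : emptySeq A ∈ Lam
  -- Case 1 : Ø ∈ Λ
  · -- get the pseudo cylinder of Λ containing Ø
    have hOU : emptySeq A ∈ ⋃₀ S := by rw [← hSU]; exact hO
    obtain ⟨s', hs'S, hOs'⟩ := hOU
    have hs'sub : s' ⊆ Lam := by rw [hSU]; exact Set.subset_sUnion_of_mem hs'S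
    rcases hS s' hs'S with hs'e | ⟨k, l, b, hk, hs'⟩
    · rw [hs'e] at hOs'; exact hOs'
    rw [hs'] at hOs' hs'sub
    have hbnone : ∀ i, k ≤ i → i ≤ l → b i = none := fun i h1 h2 =>
      (hOs'.2 i h1 h2).symm
    rw [ht2] at hzt htsub
    -- truncation of z
    set p := trunc z l2 with hp
    have hpt : p ∈ pseudoCyl Set.univ k2 l2 b2 := by
      refine ⟨Set.mem_univ _, fun i h1 h2 => ?_⟩
      show (if i ≤ l2 then z.1 i else none) = b2 i
      rw [if_pos h2]
      exact hzt.2 i h1 h2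
    have hpnot : p ∉ Lam := (htsub hpt).2
    -- but a shift of p lies in the cylinder of Ø
    have hsp : shiftBy (l2 + 1 - k) p ∈ pseudoCyl Set.univ k l b := by
      refine ⟨Set.mem_univ _, fun i h1 h2 => ?_⟩
      show (if i + (l2 + 1 - k) ≤ l2 then z.1 _ else none) = b i
      rw [if_neg (by omega), hbnone i h1 h2]
    have := hs'sub hsp
    rw [shiftBy_mem Lam hinv] at this
    exact hpnot this
  -- Case 2 : Ø ∉ Λ
  · have hOT : emptySeq A ∈ ⋃₀ T := by
      rw [← hTU]; exact ⟨Set.mem_univ _, hO⟩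
    obtain ⟨t', ht'T, hOt'⟩ := hOT
    have ht'sub : t' ⊆ Set.univ \ Lam := by rw [hTU]; exact Set.subset_sUnion_of_mem ht'T
    rcases hT t' ht'T with ht'e | ⟨k, l, b, hk, ht'⟩
    · rw [ht'e] at hOt'; exact hOt'
    rw [ht'] at hOt' ht'sub
    have hbnone : ∀ i, k ≤ i → i ≤ l → b i = none := fun i h1 h2 =>
      (hOt'.2 i h1 h2).symm
    rw [hs1] at hxs hsub
    -- truncation of x
    set p := trunc x l1 with hp
    have hps : p ∈ pseudoCyl Set.univ k1 l1 b1 := by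
      refine ⟨Set.mem_univ _, fun i h1 h2 => ?_⟩
      show (if i ≤ l1 then x.1 i else none) = b1 i
      rw [if_pos h2]
      exact hxs.2 i h1 h2
    have hpmem : p ∈ Lam := hsub hps
    have hsp : shiftBy (l1 + 1 - k) p ∈ pseudoCyl Set.univ k l b := by
      refine ⟨Set.mem_univ _, fun i h1 h2 => ?_⟩
      show (if i + (l1 + 1 - k) ≤ l1 then x.1 _ else none) = b i
      rw [if_neg (by omega), hbnone i h1 h2]
    have := (ht'sub hsp).2
    rw [shiftBy_mem Lam hinv] at this
    exact this hpmem

end SigmaZ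
end
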